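/- arXiv:2601.06107 — 3 statements merged into one kernel-verified Lean document; each statement's English description precedes it below -/
import Mathlib

section
/- Let Ω ⊂ ℝ^{n+1} be a closed convex set and u a unit vector. If for some t₀ ∈ ℝ the section Ω ∩ {x : ⟨u,x⟩ = t₀} is nonempty and bounded, then Ω ∩ {x : ⟨u,x⟩ = t} is bounded for every t ∈ ℝ. -/
open Bornology

/-!
The asymptotic cone of a closed convex set `C` consists of the directions of the rays contained
in `C`, and by compactness of the unit sphere `C` is bounded iff this cone is `{0}`. Since a ray of
`C` through a point of `C` can start at any other point of `C`, the cone of a nonempty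
intersection of closed convex sets is the intersection of their cones; and the cone of any
nonempty level set `{⟪u, ·⟫ = t}` is the hyperplane `u⊥`. Hence all nonempty sections
`Ω ∩ {⟪u, ·⟫ = t}` have the same asymptotic cone `asymptoticCone Ω ∩ u⊥`, and one of them is
bounded iff all of them are.
-/

open AffineSpace Filter

section Convex

variable {k V : Type*} [Field k] [LinearOrder k] [IsStrictOrderedRing k] [TopologicalSpace k]
  [OrderTopology k] [AddCommGroup V] [Module k V] [TopologicalSpace V] [IsTopologicalAddGroup V]
  [ContinuousSMul k V]

theorem mem_asymptoticCone_of_forall_smul_vadd_mem {s : Set V} {v : V} (p : V)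
    (h : ∀ c : k, 0 ≤ c → c • v +ᵥ p ∈ s) : v ∈ asymptoticCone k s :=
  tendsto_id.atTop_smul_const_tendsto_asymptoticNhds v |>.asymptoticNhds_vadd_const p
    |>.frequently (eventually_ge_atTop 0 |>.mono h).frequently

theorem Convex.asymptoticCone_inter {s t : Set V} (hs : Convex k s) (hs' : IsClosed s)
    (ht : Convex k t) (ht' : IsClosed t) (hst : (s ∩ t).Nonempty) :
    asymptoticCone k (s ∩ t) = asymptoticCone k s ∩ asymptoticCone k t := by
  refine subset_antisymm
    (Set.subset_inter (asymptoticCone_mono Set.inter_subset_left)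
      (asymptoticCone_mono Set.inter_subset_right)) ?_
  rintro v ⟨hvs, hvt⟩
  obtain ⟨p, hps, hpt⟩ := hst
  exact mem_asymptoticCone_of_forall_smul_vadd_mem p fun c hc =>
    ⟨hs.smul_vadd_mem_of_isClosed_of_mem_asymptoticCone hs' hc hvs hps,
      ht.smul_vadd_mem_of_isClosed_of_mem_asymptoticCone ht' hc hvt hpt⟩

theorem asymptoticCone_setOf_eq (f : V →L[k] k) {t : k} (ht : {x | f x = t}.Nonempty) :
    asymptoticCone k {x | f x = t} = {v | f v = 0} := by
  obtain ⟨p, hp : f p = t⟩ := ht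
  have hconv : Convex k {x | f x = t} := convex_hyperplane f.isLinear t
  have hclosed : IsClosed {x | f x = t} := isClosed_eq f.continuous continuous_const
  ext v
  refine ⟨fun hv => ?_, fun (hv : f v = 0) => mem_asymptoticCone_of_forall_smul_vadd_mem p ?_⟩
  · have h : f ((1 : k) • v + p) = t :=
      hconv.smul_vadd_mem_of_isClosed_of_mem_asymptoticCone hclosed zero_le_one hv hp
    simpa [hp] using h
  · intro c _
    show f (c • v + p) = t
    simpa [hv] using hp

theorem Convex.asymptoticCone_inter_setOf_eq {s : Set V} (hs : Convex k s) (hs' : IsClosed s)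
    (f : V →L[k] k) {t : k} (hst : (s ∩ {x | f x = t}).Nonempty) :
    asymptoticCone k (s ∩ {x | f x = t}) = asymptoticCone k s ∩ {v | f v = 0} :=
  (hs.asymptoticCone_inter hs' (convex_hyperplane f.isLinear t)
      (isClosed_eq f.continuous continuous_const) hst).trans
    (congrArg _ (asymptoticCone_setOf_eq f (hst.mono Set.inter_subset_right)))

end Convex

theorem stmt11_general (n : ℕ) (Ω : Set (EuclideanSpace ℝ (Fin (n+1))))
    (hclosed : IsClosed Ω) (hconv : Convex ℝ Ω)
    (u : EuclideanSpace ℝ (Fin (n+1))) (t₀ : ℝ)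
    (hne : (Ω ∩ {x | (inner ℝ u x : ℝ) = t₀}).Nonempty)
    (hbd : IsBounded (Ω ∩ {x | (inner ℝ u x : ℝ) = t₀})) :
    ∀ t : ℝ, IsBounded (Ω ∩ {x | (inner ℝ u x : ℝ) = t}) := by
  have hcone : ∀ t, (Ω ∩ {x | (inner ℝ u x : ℝ) = t}).Nonempty →
      asymptoticCone ℝ (Ω ∩ {x | (inner ℝ u x : ℝ) = t}) =
        asymptoticCone ℝ Ω ∩ {v | (inner ℝ u v : ℝ) = 0} := fun _ ht =>
    hconv.asymptoticCone_inter_setOf_eq hclosed (innerSL ℝ u) ht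
  intro t
  by_contra hub
  obtain ⟨v, hv0, hv⟩ := not_bounded_iff_exists_ne_zero_mem_asymptoticCone.mp hub
  have hvt₀ : v ∈ asymptoticCone ℝ (Ω ∩ {x | (inner ℝ u x : ℝ) = t₀}) := by
    rw [hcone t (asymptoticCone_nonempty.mp ⟨v, hv⟩)] at hv
    exact hcone t₀ hne ▸ hv
  exact hv0 (isBounded_iff_asymptoticCone_subset_singleton.mp hbd hvt₀)

/-- If one nonempty section of a closed convex set `Ω ⊂ ℝ^{n+1}` by a
hyperplane `{⟨u,x⟩ = t₀}` is bounded, then all parallel sections are bounded. -/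
theorem stmt11 (n : ℕ) (Ω : Set (EuclideanSpace ℝ (Fin (n+1))))
    (hclosed : IsClosed Ω) (hconv : Convex ℝ Ω)
    (u : EuclideanSpace ℝ (Fin (n+1))) (hu : ‖u‖ = 1) (t₀ : ℝ)
    (hne : (Ω ∩ {x | (inner ℝ u x : ℝ) = t₀}).Nonempty)
    (hbd : IsBounded (Ω ∩ {x | (inner ℝ u x : ℝ) = t₀})) :
    ∀ t : ℝ, IsBounded (Ω ∩ {x | (inner ℝ u x : ℝ) = t}) :=
  stmt11_general n Ω hclosed hconv u t₀ hne hbd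
end

section
/- Let P = {(x, y) ∈ ℝ^n × ℝ : y ≥ ‖x‖²} be the epigraph of the standard paraboloid. For every unit vector u ∈ ℝ^{n+1} with last coordinate positive and all t such that the section P ∩ {z : ⟨u,z⟩ = t} is nonempty and bounded, the centroids of these sections lie on a line parallel to the axis e_{n+1}; in particular the paraboloid satisfies the section–centroid collinearity property with all centroid lines mutually parallel. -/
/-!
The section of the paraboloid by the hyperplane `⟪u, z⟫ = t` is centrally symmetric about an
explicit point `m_t` of that hyperplane: completing the square shows that on the hyperplane the
height `⟪e, z⟫ - dist(z, ℝ e) ^ 2` above the paraboloid is invariant under `z ↦ 2 m_t - z`.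
This reflection is an isometry, so it preserves Hausdorff measure and the centroid is `m_t`.
Writing `u = v + a e` with `v ⟂ e`, the component of `m_t` orthogonal to the axis is `-v / (2a)`
for every `t`, so all centroids lie on one line parallel to `e`.
-/

open MeasureTheory Bornology

/-- The centroid of a set `S ⊂ ℝ^{n+1}` with respect to `n`-dimensional Hausdorff measure. -/
noncomputable def sectionCentroid (n : ℕ) (S : Set (EuclideanSpace ℝ (Fin (n+1)))) :
    EuclideanSpace ℝ (Fin (n+1)) :=
  ((μH[(n:ℝ)] S).toReal)⁻¹ • ∫ x in S, x ∂(μH[(n:ℝ)])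

open RealInnerProductSpace

theorem setIntegral_id_eq_smul_of_preimage_pointReflection {E : Type*}
    [NormedAddCommGroup E] [NormedSpace ℝ E] [CompleteSpace E]
    [MeasurableSpace E] [BorelSpace E]
    {μ : Measure E} {m : E} (hμ : MeasurePreserving (Equiv.pointReflection m) μ μ) {S : Set E}
    (hS : Equiv.pointReflection m ⁻¹' S = S) (hint : IntegrableOn (fun z => z) S μ)
    (hfin : μ S ≠ ⊤) :
    ∫ z in S, z ∂μ = μ.real S • m := by
  have h := hμ.setIntegral_preimage_emb (Homeomorph.pointReflection m).measurableEmbedding id S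
  simp only [hS, id, Equiv.pointReflection_apply, vsub_eq_sub, vadd_eq_add] at h
  have hconst : IntegrableOn (fun _ => m) S μ := integrableOn_const hfin
  have hrefl : IntegrableOn (fun z => m - z) S μ := hconst.sub hint
  rw [integral_add hrefl hconst, integral_sub hconst hint, setIntegral_const] at h
  linear_combination (norm := module) (-2⁻¹ : ℝ) • h

theorem sectionCentroid_eq_of_preimage_pointReflection {n : ℕ}
    {S : Set (EuclideanSpace ℝ (Fin (n+1)))} {m : EuclideanSpace ℝ (Fin (n+1))}
    (hS : Equiv.pointReflection m ⁻¹' S = S) (hSm : MeasurableSet S) (hSb : IsBounded S)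
    (hpos : μH[(n:ℝ)] S ≠ 0) (hfin : μH[(n:ℝ)] S ≠ ⊤) :
    sectionCentroid n S = m := by
  obtain ⟨R, hR⟩ := hSb.exists_norm_le
  have hint : IntegrableOn (fun z => z) S μH[(n:ℝ)] :=
    Measure.integrableOn_of_bounded hfin aestronglyMeasurable_id
      (ae_restrict_of_forall_mem hSm hR)
  have hμ := (AffineIsometryEquiv.pointReflection ℝ m).toIsometryEquiv
    |>.measurePreserving_hausdorffMeasure (n:ℝ)
  rw [sectionCentroid, setIntegral_id_eq_smul_of_preimage_pointReflection hμ hS hint hfin,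
    smul_smul, measureReal_def, inv_mul_cancel₀ (ENNReal.toReal_ne_zero.2 ⟨hpos, hfin⟩), one_smul]

section Paraboloid

variable {F : Type*} [NormedAddCommGroup F] [InnerProductSpace ℝ F]

/-- For a unit vector `e`, `‖z‖ ^ 2 - ⟪e, z⟫ ^ 2` is the squared distance from `z` to the
axis `ℝ e`. -/
def paraboloid (e : F) : Set F := {z | ‖z‖ ^ 2 - ⟪e, z⟫ ^ 2 ≤ ⟪e, z⟫}

/-- With `a = ⟪u, e⟫` and `v = u - a e`, this is `-v / (2a) + s e`, the height `s` being fixed by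
`⟪u, m⟫ = t`. -/
noncomputable def paraboloidSectionCenter (e u : F) (t : ℝ) : F :=
  (2 * ⟪u, e⟫)⁻¹ • (⟪u, e⟫ • e - u) +
    (t / ⟪u, e⟫ + (‖u‖ ^ 2 - ⟪u, e⟫ ^ 2) / (2 * ⟪u, e⟫ ^ 2)) • e

theorem isClosed_paraboloid (e : F) : IsClosed (paraboloid e) :=
  isClosed_le (by fun_prop) (by fun_prop)

variable {e u : F} {t : ℝ}

theorem inner_paraboloidSectionCenter (ha : ⟪u, e⟫ ≠ 0) :
    ⟪u, paraboloidSectionCenter e u t⟫ = t := by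
  simp only [paraboloidSectionCenter, inner_add_right, inner_smul_right, inner_sub_right,
    real_inner_self_eq_norm_sq]
  field_simp
  ring

theorem pointReflection_mem_paraboloid_inter_hyperplane (he : ‖e‖ = 1) (ha : ⟪u, e⟫ ≠ 0)
    {z : F} (hz : z ∈ paraboloid e ∩ {z | ⟪u, z⟫ = t}) :
    Equiv.pointReflection (paraboloidSectionCenter e u t) z ∈ paraboloid e ∩ {z | ⟪u, z⟫ = t} := by
  obtain ⟨hzP, rfl : ⟪u, z⟫ = t⟩ := hz
  set m := paraboloidSectionCenter e u ⟪u, z⟫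
  have hum : ⟪u, m⟫ = ⟪u, z⟫ := inner_paraboloidSectionCenter ha
  have height_eq : ‖(2 : ℝ) • m - z‖ ^ 2 - ⟪e, (2 : ℝ) • m - z⟫ ^ 2 - ⟪e, (2 : ℝ) • m - z⟫
      = ‖z‖ ^ 2 - ⟪e, z⟫ ^ 2 - ⟪e, z⟫ := by
    rw [← real_inner_self_eq_norm_sq ((2 : ℝ) • m - z)]
    simp only [m, paraboloidSectionCenter, inner_add_right, inner_add_left, inner_smul_right,
      inner_smul_left, inner_sub_right, inner_sub_left, conj_trivial]
    simp only [real_inner_self_eq_norm_sq, he, real_inner_comm u e, real_inner_comm u z,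
      real_inner_comm e z]
    field_simp
    ring
  simp only [paraboloid, Set.mem_inter_iff, Set.mem_ofPred_eq, Equiv.pointReflection_apply,
    vsub_eq_sub, vadd_eq_add] at hzP ⊢
  rw [show m - z + m = (2 : ℝ) • m - z by module]
  refine ⟨by linarith, ?_⟩
  rw [inner_sub_right, inner_smul_right, hum]
  ring

theorem preimage_pointReflection_paraboloid_inter_hyperplane (he : ‖e‖ = 1) (ha : ⟪u, e⟫ ≠ 0) :
    Equiv.pointReflection (paraboloidSectionCenter e u t) ⁻¹' (paraboloid e ∩ {z | ⟪u, z⟫ = t})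
      = paraboloid e ∩ {z | ⟪u, z⟫ = t} :=
  Set.Subset.antisymm
    (fun z hz => Equiv.pointReflection_involutive _ z ▸
      pointReflection_mem_paraboloid_inter_hyperplane he ha hz)
    (fun _ hz => pointReflection_mem_paraboloid_inter_hyperplane he ha hz)

end Paraboloid

theorem setOf_sum_sq_castSucc_le_last_eq_paraboloid (n : ℕ) :
    {z : EuclideanSpace ℝ (Fin (n+1)) | ∑ i : Fin n, (z i.castSucc)^2 ≤ z (Fin.last n)}
      = paraboloid (EuclideanSpace.single (Fin.last n) 1) := by
  ext z
  simp [paraboloid, EuclideanSpace.real_norm_sq_eq, EuclideanSpace.inner_single_left,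
    Fin.sum_univ_castSucc]

theorem stmt12_general (n : ℕ)
    (P : Set (EuclideanSpace ℝ (Fin (n+1))))
    (hP : P = {z | ∑ i : Fin n, (z i.castSucc)^2 ≤ z (Fin.last n)})
    (u : EuclideanSpace ℝ (Fin (n+1))) (hupos : 0 < u (Fin.last n)) :
    ∃ c : EuclideanSpace ℝ (Fin (n+1)), ∀ t : ℝ,
      (P ∩ {z | (inner ℝ u z : ℝ) = t}).Nonempty →
      IsBounded (P ∩ {z | (inner ℝ u z : ℝ) = t}) →
      0 < μH[(n:ℝ)] (P ∩ {z | (inner ℝ u z : ℝ) = t}) →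
      μH[(n:ℝ)] (P ∩ {z | (inner ℝ u z : ℝ) = t}) < ⊤ →
      ∃ s : ℝ, sectionCentroid n (P ∩ {z | (inner ℝ u z : ℝ) = t})
        = c + s • EuclideanSpace.single (Fin.last n) (1:ℝ) := by
  rw [hP, setOf_sum_sq_castSucc_le_last_eq_paraboloid]
  set e := EuclideanSpace.single (Fin.last n) (1:ℝ)
  have he : ‖e‖ = 1 := by simp [e]
  have ha : ⟪u, e⟫ ≠ 0 := by simpa [e, EuclideanSpace.inner_single_right] using hupos.ne'
  refine ⟨(2 * ⟪u, e⟫)⁻¹ • (⟪u, e⟫ • e - u), fun t _ hbdd hpos hfin => ?_⟩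
  have hclosed : IsClosed (paraboloid e ∩ {z | ⟪u, z⟫ = t}) :=
    (isClosed_paraboloid e).inter (isClosed_eq (by fun_prop) continuous_const)
  exact ⟨_, sectionCentroid_eq_of_preimage_pointReflection
    (preimage_pointReflection_paraboloid_inter_hyperplane he ha) hclosed.measurableSet hbdd
    hpos.ne' hfin.ne⟩

/-- For the epigraph `P = {(x,y) : y ≥ ‖x‖²}` of the standard paraboloid and
any unit vector `u` with positive last coordinate, the centroids of the nonempty bounded
hyperplane sections `P ∩ {⟨u,z⟩ = t}` (of positive finite `n`-dimensional measure) lie on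
a line parallel to the axis `e_{n+1}`; the paraboloid satisfies the section–centroid
collinearity property with all centroid lines mutually parallel. -/
theorem stmt12 (n : ℕ)
    (P : Set (EuclideanSpace ℝ (Fin (n+1))))
    (hP : P = {z | ∑ i : Fin n, (z i.castSucc)^2 ≤ z (Fin.last n)})
    (u : EuclideanSpace ℝ (Fin (n+1))) (hu : ‖u‖ = 1) (hupos : 0 < u (Fin.last n)) :
    ∃ c : EuclideanSpace ℝ (Fin (n+1)), ∀ t : ℝ,
      (P ∩ {z | (inner ℝ u z : ℝ) = t}).Nonempty →
      IsBounded (P ∩ {z | (inner ℝ u z : ℝ) = t}) →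
      0 < μH[(n:ℝ)] (P ∩ {z | (inner ℝ u z : ℝ) = t}) →
      μH[(n:ℝ)] (P ∩ {z | (inner ℝ u z : ℝ) = t}) < ⊤ →
      ∃ s : ℝ, sectionCentroid n (P ∩ {z | (inner ℝ u z : ℝ) = t})
        = c + s • EuclideanSpace.single (Fin.last n) (1:ℝ) :=
  stmt12_general n P hP u hupos
end

section
/- Let Ω ⊂ ℝ^{n+1} be a closed convex set with recession cone C = rec(Ω), and let Ω_R = (1/R)Ω. Fix a unit vector u and t > 0 such that the sections Ω_R ∩ Π(u,t) are nonempty, bounded, and have positive n-dimensional measure for all large R, and such that C ∩ Π(u,t) is bounded with positive n-dimensional measure. Suppose Ω_R ∩ Π(u,t) converges to C ∩ Π(u,t) in Hausdorff distance as R → ∞, and suppose the centroid of Ω ∩ Π(u,s) equals q + s·w for all s in an unbounded interval (with fixed q, w ∈ ℝ^{n+1}). Then w equals the direction vector w_C of the centroid line of C, i.e., the centroid of C ∩ Π(u,t) is t·w for all admissible t. -/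
/-!
Rescaling by `R⁻¹` carries the section of `Ω` at height `R t` to the section of `Ω_R` at
height `t`, so the centroid of `Ω_R ∩ Π(u,t)` is `R⁻¹ q + t w`, which tends to `t w`.
These sections are convex and converge in Hausdorff distance to the convex body
`C ∩ Π(u,t)`; as the boundary of a convex body is null for Lebesgue measure on the
hyperplane, their indicators converge almost everywhere, and dominated convergence makes
their centroids converge to the centroid of `C ∩ Π(u,t)`, which is therefore `t w`. Finally,
`C` is a cone, so its section at height `t'` is `t' / t` times its section at height `t`.
-/

open MeasureTheory Bornology Filter Pointwise

open Metric Module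
open scoped NNReal

section RecessionCone

variable {E : Type*} [AddCommGroup E] [Module ℝ E]

def recessionCone (Ω : Set E) : Set E :=
  {d | ∀ x ∈ Ω, ∀ r : ℝ, 0 ≤ r → x + r • d ∈ Ω}

variable {Ω : Set E}

theorem isClosed_recessionCone [TopologicalSpace E] [IsTopologicalAddGroup E]
    [ContinuousSMul ℝ E] (hΩ : IsClosed Ω) : IsClosed (recessionCone Ω) := by
  have : recessionCone Ω =
      ⋂ x ∈ Ω, ⋂ r : ℝ, ⋂ (_ : 0 ≤ r), (fun d => x + r • d) ⁻¹' Ω := by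
    ext d; simp [recessionCone]
  rw [this]
  exact isClosed_biInter fun x _ => isClosed_iInter fun r => isClosed_iInter fun _ =>
    hΩ.preimage (continuous_const.add (continuous_const_smul r))

theorem convex_recessionCone (hΩ : Convex ℝ Ω) : Convex ℝ (recessionCone Ω) := by
  intro d₁ hd₁ d₂ hd₂ a b ha hb hab x hx r hr
  convert hΩ (hd₁ x hx r hr) (hd₂ x hx r hr) ha hb hab using 1
  obtain rfl : b = 1 - a := by linarith
  module

theorem smul_mem_recessionCone {c : ℝ} (hc : 0 ≤ c) {d : E}
    (hd : d ∈ recessionCone Ω) : c • d ∈ recessionCone Ω := by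
  intro x hx r hr
  rw [smul_smul]
  exact hd x hx (r * c) (mul_nonneg hr hc)

theorem smul_recessionCone {c : ℝ} (hc : 0 < c) :
    c • recessionCone Ω = recessionCone Ω := by
  refine (Set.smul_set_subset_iff.2 fun d hd => smul_mem_recessionCone hc.le hd).antisymm
    fun d hd =>
      ⟨c⁻¹ • d, smul_mem_recessionCone (inv_nonneg.2 hc.le) hd, smul_inv_smul₀ hc.ne' d⟩

end RecessionCone

section Hyperplane

variable {E : Type*} [NormedAddCommGroup E] [InnerProductSpace ℝ E]

theorem isClosed_setOf_inner_eq (u : E) (t : ℝ) : IsClosed {x | inner ℝ u x = t} :=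
  isClosed_eq (continuous_const.inner continuous_id) continuous_const

theorem convex_setOf_inner_eq (u : E) (t : ℝ) : Convex ℝ {x | inner ℝ u x = t} :=
  convex_hyperplane (innerₛₗ ℝ u).isLinear t

theorem smul_setOf_inner_eq {c : ℝ} (hc : c ≠ 0) (u : E) (t : ℝ) :
    c • {x | inner ℝ u x = t} = {x | inner ℝ u x = c * t} := by
  ext x
  rw [Set.mem_smul_set_iff_inv_smul_mem₀ hc, Set.mem_ofPred_eq, Set.mem_ofPred_eq,
    real_inner_smul_right, inv_mul_eq_iff_eq_mul₀ hc]

theorem smul_inter_setOf_inner_eq {c : ℝ} (hc : c ≠ 0) (S : Set E) (u : E) (t : ℝ) :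
    c • (S ∩ {x | inner ℝ u x = t}) = c • S ∩ {x | inner ℝ u x = c * t} := by
  rw [Set.smul_set_inter₀ hc, smul_setOf_inner_eq hc]

theorem exists_affineIsometry_range_eq_setOf_inner_eq {n : ℕ} (hE : finrank ℝ E = n + 1)
    {u : E} (hu : u ≠ 0) (t : ℝ) :
    ∃ e : EuclideanSpace ℝ (Fin n) →ᵃⁱ[ℝ] E, Set.range e = {x | inner ℝ u x = t} := by
  have : Fact (finrank ℝ E = n + 1) := ⟨hE⟩
  let U := (OrthonormalBasis.fromOrthogonalSpanSingleton (𝕜 := ℝ) n hu).repr.symm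
  let p : E := (t / ‖u‖ ^ 2) • u
  have hp : inner ℝ u p = t := by
    rw [real_inner_smul_right, real_inner_self_eq_norm_sq]
    field_simp
  refine ⟨(AffineIsometryEquiv.constVAdd ℝ E p).toAffineIsometry.comp
    ((ℝ ∙ u)ᗮ.subtypeₗᵢ.comp U.toLinearIsometry).toAffineIsometry, ?_⟩
  ext x
  simp only [Set.mem_range, Set.mem_ofPred_eq]
  constructor
  · rintro ⟨y, rfl⟩
    simp [inner_add_right, hp, Submodule.mem_orthogonal_singleton_iff_inner_right.1 (U y).2]
  · intro hx
    have hv : x - p ∈ (ℝ ∙ u)ᗮ := by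
      rw [Submodule.mem_orthogonal_singleton_iff_inner_right, inner_sub_right, hx, hp, sub_self]
    exact ⟨U.symm ⟨x - p, hv⟩, by simp⟩

end Hyperplane

section Scaling

variable {E : Type*} [NormedAddCommGroup E] [NormedSpace ℝ E] [MeasurableSpace E] [BorelSpace E]
  {d : ℝ}

theorem map_smul_hausdorffMeasure (hd : 0 ≤ d) {c : ℝ} (hc : c ≠ 0) :
    Measure.map (c • ·) (μH[d] : Measure E) = (‖c⁻¹‖₊ ^ d : ℝ≥0) • μH[d] := by
  ext1 A hA
  rw [Measure.map_apply (measurable_const_smul c) hA, Set.preimage_smul₀ hc,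
    Measure.hausdorffMeasure_smul₀ hd (inv_ne_zero hc), Measure.smul_apply]

theorem setIntegral_smul_set_hausdorffMeasure {F : Type*} [NormedAddCommGroup F]
    [NormedSpace ℝ F] (hd : 0 ≤ d) {c : ℝ} (hc : c ≠ 0) (g : E → F) (S : Set E) :
    ∫ x in c • S, g x ∂μH[d] = ‖c‖ ^ d • ∫ x in S, g (c • x) ∂μH[d] := by
  have hemb : MeasurableEmbedding (c • · : E → E) :=
    (Homeomorph.smulOfNeZero c hc).measurableEmbedding
  have h := hemb.setIntegral_map (μ := μH[d]) g (c • S)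
  rw [map_smul_hausdorffMeasure hd hc, Measure.restrict_smul, integral_smul_nnreal_measure,
    Set.preimage_smul₀ hc, inv_smul_smul₀ hc] at h
  rw [← h, NNReal.smul_def, smul_smul, NNReal.coe_rpow, coe_nnnorm, norm_inv,
    Real.inv_rpow (norm_nonneg c), mul_inv_cancel₀ (by positivity), one_smul]

end Scaling

theorem sectionCentroid_smul {n : ℕ} {c : ℝ} (hc : c ≠ 0)
    (S : Set (EuclideanSpace ℝ (Fin (n + 1)))) :
    sectionCentroid n (c • S) = c • sectionCentroid n S := by
  have hn : (0 : ℝ) ≤ n := n.cast_nonneg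
  have hcn : ‖c‖ ^ (n : ℝ) ≠ 0 := by positivity
  simp only [sectionCentroid, Measure.hausdorffMeasure_smul₀ hn hc,
    setIntegral_smul_set_hausdorffMeasure hn hc, ENNReal.smul_def, smul_eq_mul,
    ENNReal.toReal_mul, ENNReal.coe_toReal, NNReal.coe_rpow, coe_nnnorm, smul_smul]
  rw [integral_smul, smul_smul]
  congr 1
  field_simp

section HausdorffConvergence

variable {F : Type*} [NormedAddCommGroup F] [InnerProductSpace ℝ F]

theorem Convex.mem_of_forall_mem_ball_infDist_lt [CompleteSpace F] {B : Set F} (hB : Convex ℝ B)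
    (hBc : IsClosed B) (hBne : B.Nonempty) {y : F} {r : ℝ} (hr : 0 < r)
    (hd : ∀ z ∈ ball y r, infDist z B < r / 2) : y ∈ B := by
  by_contra hyB
  obtain ⟨f, c, hfy, hfB⟩ := geometric_hahn_banach_point_closed hB hBc hyB
  set a := (InnerProductSpace.toDual ℝ F).symm f
  have hfa (x : F) : f x = inner ℝ a x := InnerProductSpace.toDual_symm_apply.symm
  obtain ⟨b₀, hb₀⟩ := hBne
  have ha : 0 < ‖a‖ := by
    refine norm_pos_iff.2 fun ha => ?_
    have := hfB b₀ hb₀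
    rw [hfa, ha, inner_zero_left] at this hfy
    linarith
  -- stepping `r / 2` from `y` away from the separating hyperplane stays `r / 2` away from `B`
  set z := y - (r / 2 / ‖a‖) • a
  have hzy : dist z y = r / 2 := by
    rw [dist_eq_norm, sub_sub_cancel_left, norm_neg, norm_smul,
      Real.norm_of_nonneg (by positivity), div_mul_cancel₀ _ ha.ne']
  have hfz : f z = f y - r / 2 * ‖a‖ := by
    rw [map_sub, map_smul, hfa a, real_inner_self_eq_norm_sq, smul_eq_mul]
    field_simp
  have hfar : r / 2 ≤ infDist z B := by
    refine (le_infDist ⟨b₀, hb₀⟩).2 fun b hb => ?_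
    have hsep : r / 2 * ‖a‖ < inner ℝ a (b - z) := by
      rw [inner_sub_right, ← hfa, ← hfa, hfz]
      linarith [hfB b hb]
    rw [dist_comm, dist_eq_norm]
    nlinarith [real_inner_le_norm a (b - z)]
  exact (hfar.trans_lt (hd z (by rw [mem_ball, hzy]; linarith))).false

variable {ι : Type*} {l : Filter ι} {A : ι → Set F} {K : Set F}

theorem eventually_mem_iff_of_tendsto_hausdorffDist [CompleteSpace F] (hK : IsClosed K)
    (hKne : K.Nonempty)
    (hAc : ∀ᶠ i in l, IsClosed (A i)) (hAconv : ∀ᶠ i in l, Convex ℝ (A i))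
    (hfin : ∀ᶠ i in l, hausdorffEDist (A i) K ≠ ⊤)
    (hlim : Tendsto (fun i => hausdorffDist (A i) K) l (nhds 0)) {y : F} (hy : y ∉ frontier K) :
    ∀ᶠ i in l, y ∈ A i ↔ y ∈ K := by
  by_cases hyK : y ∈ K
  · have hyint : y ∈ interior K := by
      by_contra h
      exact hy ⟨subset_closure hyK, h⟩
    obtain ⟨r, hr, hball⟩ := Metric.isOpen_iff.mp isOpen_interior y hyint
    filter_upwards [hAc, hAconv, hfin, hlim.eventually_lt_const (half_pos hr)]
      with i hc hconv hf hsmall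
    rw [hausdorffEDist_comm] at hf
    rw [hausdorffDist_comm] at hsmall
    refine iff_of_true (hconv.mem_of_forall_mem_ball_infDist_lt hc
      (nonempty_of_hausdorffEDist_ne_top hKne hf) hr fun z hz => ?_) hyK
    exact (infDist_le_hausdorffDist_of_mem (interior_subset (hball hz)) hf).trans_lt hsmall
  · have hpos := (hK.notMem_iff_infDist_pos hKne).1 hyK
    filter_upwards [hfin, hlim.eventually_lt_const hpos] with i hf hsmall
    exact iff_of_false (fun hyA => (infDist_le_hausdorffDist_of_mem hyA hf).not_gt hsmall) hyK

variable [FiniteDimensional ℝ F] [MeasurableSpace F] [BorelSpace F] (μ : Measure F)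
  [μ.IsAddHaarMeasure]

theorem tendsto_setIntegral_of_tendsto_hausdorffDist [l.IsCountablyGenerated]
    {G : Type*} [NormedAddCommGroup G] [NormedSpace ℝ G]
    (hK : IsCompact K) (hKconv : Convex ℝ K) (hKne : K.Nonempty)
    (hAc : ∀ᶠ i in l, IsClosed (A i)) (hAconv : ∀ᶠ i in l, Convex ℝ (A i))
    (hfin : ∀ᶠ i in l, hausdorffEDist (A i) K ≠ ⊤)
    (hlim : Tendsto (fun i => hausdorffDist (A i) K) l (nhds 0)) {g : F → G} (hg : Continuous g) :
    Tendsto (fun i => ∫ x in A i, g x ∂μ) l (nhds (∫ x in K, g x ∂μ)) := by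
  set D := cthickening 1 K
  have hD : IsCompact D := hK.cthickening
  obtain ⟨M, hM⟩ := hD.exists_bound_of_continuousOn hg.continuousOn
  have hAD : ∀ᶠ i in l, A i ⊆ D := by
    filter_upwards [hfin, hlim.eventually_lt_const one_pos] with i hf hsmall x hx
    exact thickening_subset_cthickening _ _ ((mem_thickening_iff_infDist_lt hKne).2
      ((infDist_le_hausdorffDist_of_mem hx hf).trans_lt hsmall))
  have hmeas : ∀ᶠ i in l, MeasurableSet (A i) := hAc.mono fun i h => h.measurableSet
  rw [← integral_indicator hK.isClosed.measurableSet]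
  refine Tendsto.congr' (hmeas.mono fun i hi => integral_indicator hi) ?_
  refine tendsto_integral_filter_of_dominated_convergence (D.indicator fun _ => M) ?_ ?_ ?_ ?_
  · filter_upwards [hmeas] with i hi
    exact hg.aestronglyMeasurable.indicator hi
  · filter_upwards [hAD] with i hi
    refine ae_of_all _ fun x => ?_
    by_cases hx : x ∈ A i
    · rw [Set.indicator_of_mem hx, Set.indicator_of_mem (hi hx)]
      exact hM x (hi hx)
    · rw [Set.indicator_of_notMem hx, norm_zero]
      exact Set.indicator_nonneg (fun x hx => (norm_nonneg _).trans (hM x hx)) x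
  · exact (integrable_indicator_iff hD.isClosed.measurableSet).2
      (integrableOn_const hD.measure_lt_top.ne)
  · filter_upwards [measure_eq_zero_iff_ae_notMem.1 (hKconv.addHaar_frontier μ)] with y hy
    refine tendsto_const_nhds.congr' ?_
    filter_upwards [eventually_mem_iff_of_tendsto_hausdorffDist hK.isClosed hKne hAc hAconv hfin
      hlim hy] with i hi
    by_cases hyK : y ∈ K
    · rw [Set.indicator_of_mem hyK, Set.indicator_of_mem (hi.2 hyK)]
    · rw [Set.indicator_of_notMem hyK, Set.indicator_of_notMem (mt hi.1 hyK)]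

theorem tendsto_centroid_of_tendsto_hausdorffDist [l.IsCountablyGenerated]
    {G : Type*} [NormedAddCommGroup G] [NormedSpace ℝ G]
    (hK : IsCompact K) (hKconv : Convex ℝ K) (hKpos : 0 < μ K)
    (hAc : ∀ᶠ i in l, IsClosed (A i)) (hAconv : ∀ᶠ i in l, Convex ℝ (A i))
    (hfin : ∀ᶠ i in l, hausdorffEDist (A i) K ≠ ⊤)
    (hlim : Tendsto (fun i => hausdorffDist (A i) K) l (nhds 0)) {g : F → G} (hg : Continuous g) :
    Tendsto (fun i => (μ (A i)).toReal⁻¹ • ∫ x in A i, g x ∂μ) l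
      (nhds ((μ K).toReal⁻¹ • ∫ x in K, g x ∂μ)) := by
  have hKne : K.Nonempty := nonempty_of_measure_ne_zero hKpos.ne'
  have hint :=
    tendsto_setIntegral_of_tendsto_hausdorffDist μ hK hKconv hKne hAc hAconv hfin hlim hg
  have hvol := tendsto_setIntegral_of_tendsto_hausdorffDist μ hK hKconv hKne hAc hAconv hfin hlim
    (continuous_const (y := (1 : ℝ)))
  simp only [setIntegral_const, smul_eq_mul, mul_one, measureReal_def] at hvol
  exact (hvol.inv₀ (ENNReal.toReal_pos hKpos.ne' hK.measure_lt_top.ne).ne').smul hint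

end HausdorffConvergence

section Centroid

variable {n : ℕ}

theorem sectionCentroid_eq_of_subset_range {F : Type*} [MetricSpace F] [CompleteSpace F]
    [MeasurableSpace F] [BorelSpace F] {e : F → EuclideanSpace ℝ (Fin (n + 1))}
    (he : Isometry e) {S : Set (EuclideanSpace ℝ (Fin (n + 1)))} (hS : S ⊆ Set.range e) :
    sectionCentroid n S =
      (μH[(n : ℝ)] (e ⁻¹' S)).toReal⁻¹ • ∫ y in e ⁻¹' S, e y ∂μH[(n : ℝ)] := by
  have hd : (0 : ℝ) ≤ n ∨ Function.Surjective e := Or.inl n.cast_nonneg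
  rw [sectionCentroid, he.hausdorffMeasure_preimage hd, Set.inter_eq_left.2 hS,
    ← he.isClosedEmbedding.measurableEmbedding.setIntegral_map (fun x => x),
    he.map_hausdorffMeasure hd, Measure.restrict_restrict_of_subset hS]

theorem tendsto_sectionCentroid_of_tendsto_hausdorffDist {ι : Type*} {l : Filter ι}
    [l.IsCountablyGenerated] {u : EuclideanSpace ℝ (Fin (n + 1))} (hu : u ≠ 0) {t : ℝ}
    {A : ι → Set (EuclideanSpace ℝ (Fin (n + 1)))} {K : Set (EuclideanSpace ℝ (Fin (n + 1)))}
    (hKH : K ⊆ {x | inner ℝ u x = t}) (hKc : IsClosed K) (hKconv : Convex ℝ K)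
    (hKb : IsBounded K) (hKpos : 0 < μH[(n : ℝ)] K)
    (hAH : ∀ᶠ i in l, A i ⊆ {x | inner ℝ u x = t}) (hAc : ∀ᶠ i in l, IsClosed (A i))
    (hAconv : ∀ᶠ i in l, Convex ℝ (A i)) (hAne : ∀ᶠ i in l, (A i).Nonempty)
    (hAb : ∀ᶠ i in l, IsBounded (A i))
    (hlim : Tendsto (fun i => hausdorffDist (A i) K) l (nhds 0)) :
    Tendsto (fun i => sectionCentroid n (A i)) l (nhds (sectionCentroid n K)) := by
  obtain ⟨e, he⟩ :=
    exists_affineIsometry_range_eq_setOf_inner_eq finrank_euclideanSpace_fin hu t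
  have : (μH[(n : ℝ)] : Measure (EuclideanSpace ℝ (Fin n))).IsAddHaarMeasure := by
    simpa using isAddHaarMeasure_hausdorffMeasure (E := EuclideanSpace ℝ (Fin n))
  have hKr : K ⊆ Set.range e := he ▸ hKH
  have hAr : ∀ᶠ i in l, A i ⊆ Set.range e := he ▸ hAH
  have hK'pos : 0 < μH[(n : ℝ)] (e ⁻¹' K) := by
    rwa [e.isometry.hausdorffMeasure_preimage (Or.inl n.cast_nonneg), Set.inter_eq_left.2 hKr]
  have hK'ne : (e ⁻¹' K).Nonempty := nonempty_of_measure_ne_zero hK'pos.ne'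
  have hK'c : IsCompact (e ⁻¹' K) := isCompact_of_isClosed_isBounded
    (hKc.preimage e.continuous) (e.isometry.antilipschitz.isBounded_preimage hKb)
  have hA'fin : ∀ᶠ i in l, hausdorffEDist (e ⁻¹' A i) (e ⁻¹' K) ≠ ⊤ := by
    filter_upwards [hAr, hAne, hAb] with i hr hne hb
    exact hausdorffEDist_ne_top_of_nonempty_of_bounded (hne.preimage' hr) hK'ne
      (e.isometry.antilipschitz.isBounded_preimage hb) hK'c.isBounded
  have hA'lim : Tendsto (fun i => hausdorffDist (e ⁻¹' A i) (e ⁻¹' K)) l (nhds 0) := by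
    refine hlim.congr' ?_
    filter_upwards [hAr] with i hr
    rw [← hausdorffDist_image e.isometry, Set.image_preimage_eq_of_subset hr,
      Set.image_preimage_eq_of_subset hKr]
  have hA'c : ∀ᶠ i in l, IsClosed (e ⁻¹' A i) := hAc.mono fun i h => h.preimage e.continuous
  have hA'conv : ∀ᶠ i in l, Convex ℝ (e ⁻¹' A i) :=
    hAconv.mono fun i h => h.affine_preimage e.toAffineMap
  rw [sectionCentroid_eq_of_subset_range e.isometry hKr]
  refine (tendsto_centroid_of_tendsto_hausdorffDist μH[(n : ℝ)] hK'c
    (hKconv.affine_preimage e.toAffineMap) hK'pos hA'c hA'conv hA'fin hA'lim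
    e.continuous).congr' ?_
  filter_upwards [hAr] with i hr
  rw [sectionCentroid_eq_of_subset_range e.isometry hr]

end Centroid

/-- Let `Ω` be closed convex with recession cone `C`, `Ω_R = R⁻¹ Ω`. Fix a
unit vector `u` and `t > 0` such that for all large `R` the sections `Ω_R ∩ Π(u,t)` are
nonempty, bounded, of positive finite `n`-dimensional measure, and `C ∩ Π(u,t)` is bounded
of positive `n`-dimensional measure. If `Ω_R ∩ Π(u,t)` converges in Hausdorff distance to
`C ∩ Π(u,t)` as `R → ∞`, and the centroid of `Ω ∩ Π(u,s)` equals `q + s•w` on an unbounded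
interval `[s₀,∞)`, then `w` is the direction of the centroid line of `C`: the centroid of
`C ∩ Π(u,t')` is `t'•w` for all admissible `t' > 0`. -/
theorem stmt14 (n : ℕ) (Ω : Set (EuclideanSpace ℝ (Fin (n+1))))
    (hclosed : IsClosed Ω) (hconv : Convex ℝ Ω)
    (C : Set (EuclideanSpace ℝ (Fin (n+1))))
    (hC : C = {d | ∀ x ∈ Ω, ∀ r : ℝ, 0 ≤ r → x + r • d ∈ Ω})
    (u : EuclideanSpace ℝ (Fin (n+1))) (hu : ‖u‖ = 1) (t : ℝ) (ht : 0 < t)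
    (hsec : ∃ R₀ : ℝ, ∀ R ≥ R₀,
      ((R⁻¹ • Ω) ∩ {x | (inner ℝ u x : ℝ) = t}).Nonempty ∧
      IsBounded ((R⁻¹ • Ω) ∩ {x | (inner ℝ u x : ℝ) = t}) ∧
      0 < μH[(n:ℝ)] ((R⁻¹ • Ω) ∩ {x | (inner ℝ u x : ℝ) = t}) ∧
      μH[(n:ℝ)] ((R⁻¹ • Ω) ∩ {x | (inner ℝ u x : ℝ) = t}) < ⊤)
    (hCbd : IsBounded (C ∩ {x | (inner ℝ u x : ℝ) = t}))
    (hCpos : 0 < μH[(n:ℝ)] (C ∩ {x | (inner ℝ u x : ℝ) = t}))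
    (hHaus : Tendsto (fun R : ℝ =>
        Metric.hausdorffDist ((R⁻¹ • Ω) ∩ {x | (inner ℝ u x : ℝ) = t})
          (C ∩ {x | (inner ℝ u x : ℝ) = t})) atTop (nhds 0))
    (q w : EuclideanSpace ℝ (Fin (n+1))) (s₀ : ℝ)
    (hcen : ∀ s : ℝ, s₀ ≤ s →
      sectionCentroid n (Ω ∩ {x | (inner ℝ u x : ℝ) = s}) = q + s • w) :
    ∀ t' : ℝ, 0 < t' → IsBounded (C ∩ {x | (inner ℝ u x : ℝ) = t'}) →
      0 < μH[(n:ℝ)] (C ∩ {x | (inner ℝ u x : ℝ) = t'}) →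
      sectionCentroid n (C ∩ {x | (inner ℝ u x : ℝ) = t'}) = t' • w := by
  intro t' ht' _ _
  replace hC : C = recessionCone Ω := hC
  subst hC
  obtain ⟨R₀, hsec⟩ := hsec
  have hrescaled : Tendsto (fun R : ℝ => sectionCentroid n ((R⁻¹ • Ω) ∩ {x | inner ℝ u x = t}))
      atTop (nhds (t • w)) := by
    have hlin : Tendsto (fun R : ℝ => R⁻¹ • q + t • w) atTop (nhds (t • w)) := by
      simpa using ((tendsto_inv_atTop_zero (𝕜 := ℝ)).smul_const q).add_const (t • w)
    refine hlin.congr' ?_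
    filter_upwards [eventually_gt_atTop 0, eventually_ge_atTop (s₀ / t)] with R hR hRs
    rw [← inv_mul_cancel_left₀ hR.ne' t, ← smul_inter_setOf_inner_eq (inv_ne_zero hR.ne'),
      sectionCentroid_smul (inv_ne_zero hR.ne'), hcen _ ((div_le_iff₀ ht).1 hRs), smul_add,
      smul_smul, inv_mul_cancel_left₀ hR.ne']
  have hcone : Tendsto (fun R : ℝ => sectionCentroid n ((R⁻¹ • Ω) ∩ {x | inner ℝ u x = t}))
      atTop (nhds (sectionCentroid n (recessionCone Ω ∩ {x | inner ℝ u x = t}))) := by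
    have hR : ∀ᶠ R in atTop, 0 < R ∧ R₀ ≤ R :=
      (eventually_gt_atTop 0).and (eventually_ge_atTop R₀)
    refine tendsto_sectionCentroid_of_tendsto_hausdorffDist
      (norm_ne_zero_iff.1 (hu ▸ one_ne_zero)) Set.inter_subset_right
      ((isClosed_recessionCone hclosed).inter (isClosed_setOf_inner_eq u t))
      ((convex_recessionCone hconv).inter (convex_setOf_inner_eq u t)) hCbd hCpos
      (.of_forall fun R => Set.inter_subset_right)
      (hR.mono fun R hR => (hclosed.smul_of_ne_zero (inv_ne_zero hR.1.ne')).inter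
        (isClosed_setOf_inner_eq u t))
      (.of_forall fun R => (hconv.smul R⁻¹).inter (convex_setOf_inner_eq u t))
      (hR.mono fun R hR => (hsec R hR.2).1) (hR.mono fun R hR => (hsec R hR.2).2.1) hHaus
  have hcenC : sectionCentroid n (recessionCone Ω ∩ {x | inner ℝ u x = t}) = t • w :=
    tendsto_nhds_unique hcone hrescaled
  have hc : 0 < t' / t := div_pos ht' ht
  rw [← div_mul_cancel₀ t' ht.ne', ← smul_recessionCone hc,
    ← smul_inter_setOf_inner_eq hc.ne', sectionCentroid_smul hc.ne', hcenC, smul_smul]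
end
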